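/- arXiv:1910.13517 — 2 statements merged into one kernel-verified Lean document; each statement's English description precedes it below -/
import Mathlib

section
/- (Kochen–Stone theorem) Let (A_n) be a sequence of events in a probability space with sum_n P[A_n] = ∞. Then P[A_n infinitely often] ≥ limsup_{k→∞} ( sum_{i_0 ≤ i < j ≤ k} P[A_i]P[A_j] ) / ( sum_{i_0 ≤ i < j ≤ k} P[A_i ∩ A_j] ), for any fixed starting index i_0. -/
/-! Cauchy–Schwarz for `S = ∑_{m ≤ i ≤ k} 1_{A i}` against the indicator of its support gives
`(∑ P(A_i))² ≤ P(⋃_{m ≤ i ≤ k} A_i) · (∑ P(A_i) + 2 ∑_{m ≤ i < j ≤ k} P(A_i ∩ A_j))`.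
With `T_k = ∑_{i0 ≤ i ≤ k} P(A_i) → ∞`, the same bound for `m = i0` and `P ≤ 1` gives
`T_k² ≤ T_k + 2 D_k`, so the pair sums `D_k` grow like `T_k²`; hence discarding the finitely many
terms with `i < m`, and bounding `N_k ≤ T_k² / 2`, costs only `O(1 / T_k)` in the ratio. Thus
`limsup N_k / D_k ≤ P(⋃_{i ≥ m} A_i)` for every `m ≥ i0`, and these probabilities decrease to
`P(limsup A)`. -/

open MeasureTheory Filter Finset
open scoped ENNReal Topology

namespace KochenStone

def pairSum {M : Type*} [AddCommMonoid M] (f : ℕ → ℕ → M) (m k : ℕ) : M :=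
  ∑ j ∈ Icc m k, ∑ i ∈ Ico m j, f i j

lemma pairSum_nonneg {f : ℕ → ℕ → ℝ} (hf : ∀ i j, 0 ≤ f i j) (m k : ℕ) : 0 ≤ pairSum f m k :=
  sum_nonneg fun _ _ => sum_nonneg fun _ _ => hf _ _

lemma pairSum_le_pairSum_of_le {f : ℕ → ℕ → ℝ} (hf : ∀ i j, 0 ≤ f i j) {l m : ℕ} (hlm : l ≤ m)
    (k : ℕ) : pairSum f m k ≤ pairSum f l k :=
  calc pairSum f m k ≤ ∑ j ∈ Icc m k, ∑ i ∈ Ico l j, f i j :=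
        sum_le_sum fun _ _ => sum_le_sum_of_subset_of_nonneg (Ico_subset_Ico_left hlm)
          fun _ _ _ => hf _ _
    _ ≤ pairSum f l k :=
        sum_le_sum_of_subset_of_nonneg (Icc_subset_Icc_left hlm)
          fun _ _ _ => sum_nonneg fun _ _ => hf _ _

lemma sum_Icc_sum_Icc_eq_sum_add_two_mul_pairSum {R : Type*} [CommSemiring R] {f : ℕ → ℕ → R}
    (hf : ∀ i j, f i j = f j i) (m k : ℕ) :
    ∑ j ∈ Icc m k, ∑ i ∈ Icc m k, f i j = ∑ j ∈ Icc m k, f j j + 2 * pairSum f m k := by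
  rcases lt_or_ge k m with hkm | hmk
  · simp [pairSum, Icc_eq_empty_of_lt hkm]
  induction k, hmk using Nat.le_induction with
  | base => simp [pairSum]
  | succ k hmk ih =>
    have hmk' : m ≤ k + 1 := by omega
    simp only [pairSum, sum_Icc_succ_top hmk', sum_add_distrib, Ico_add_one_right_eq_Icc] at ih ⊢
    rw [ih, sum_congr rfl fun j _ => hf (k + 1) j]
    ring

lemma two_mul_pairSum_mul_le_sq (x : ℕ → ℝ) (m k : ℕ) :
    2 * pairSum (fun i j => x i * x j) m k ≤ (∑ i ∈ Icc m k, x i) ^ 2 := by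
  rw [sq, sum_mul_sum, sum_comm,
    sum_Icc_sum_Icc_eq_sum_add_two_mul_pairSum fun i j => mul_comm _ _]
  have : 0 ≤ ∑ j ∈ Icc m k, x j * x j := sum_nonneg fun j _ => mul_self_nonneg (x j)
  linarith

-- `T`, `N`, `D` are the sums from `l` in the theorem, `p` the probability of a union from `m`,
-- and `c` the mass of the terms `l ≤ i < m`.
lemma div_le_add_of_sq_sub_le_mul {T N D p c : ℝ} (hT : 2 ≤ T) (hc : 0 ≤ c) (hp : p ≤ 1)
    (hN : 2 * N ≤ T ^ 2) (hD : T ^ 2 ≤ T + 2 * D) (hpT : T ^ 2 - 2 * c * T ≤ p * (T + 2 * D)) :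
    N / D ≤ p + (4 * c + 2) / T := by
  have hDT : T ^ 2 ≤ 4 * D := by nlinarith
  have hD0 : 0 < D := by nlinarith
  have hT0 : 0 ≤ T := by linarith
  rw [div_le_iff₀ hD0, add_mul, div_mul_eq_mul_div, ← sub_le_iff_le_add', le_div_iff₀ (by linarith)]
  linarith [mul_le_mul_of_nonneg_right hpT hT0, mul_le_mul_of_nonneg_right hp (sq_nonneg T),
    mul_le_mul_of_nonneg_right hN hT0, mul_le_mul_of_nonneg_left hDT (by linarith : 0 ≤ 2 * c + 1)]

section Measure

variable {Ω : Type*} {m0 : MeasurableSpace Ω} (μ : Measure Ω)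

lemma sq_lintegral_le_measure_mul_lintegral_sq {f : Ω → ℝ≥0∞} (hf : AEMeasurable f μ)
    {U : Set Ω} (hU : MeasurableSet U) (hfU : Function.support f ⊆ U) :
    (∫⁻ ω, f ω ∂μ) ^ 2 ≤ μ U * ∫⁻ ω, f ω ^ 2 ∂μ := by
  have hfg : f * U.indicator 1 = f := by
    ext ω
    by_cases hω : ω ∈ U
    · simp [hω]
    · simp [hω, Function.notMem_support.mp (fun h => hω (hfU h))]
  have hg2 : ∫⁻ ω, U.indicator 1 ω ^ (2 : ℝ) ∂μ = μ U := by
    rw [← lintegral_indicator_one hU]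
    congr 1 with ω
    by_cases hω : ω ∈ U <;> simp [hω]
  have holder := ENNReal.lintegral_mul_le_Lp_mul_Lq μ Real.HolderConjugate.two_two hf
    ((measurable_one.indicator hU).aemeasurable)
  rw [hfg, hg2] at holder
  have hsq : ∀ x : ℝ≥0∞, (x ^ (1 / 2 : ℝ)) ^ 2 = x := fun x => by
    rw [← ENNReal.rpow_natCast, ← ENNReal.rpow_mul]; norm_num
  calc (∫⁻ ω, f ω ∂μ) ^ 2
      ≤ ((∫⁻ ω, f ω ^ (2 : ℝ) ∂μ) ^ (1 / 2 : ℝ) * μ U ^ (1 / 2 : ℝ)) ^ 2 := by gcongr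
    _ = μ U * ∫⁻ ω, f ω ^ 2 ∂μ := by
      simp only [mul_pow, hsq, ENNReal.rpow_two]
      ring

lemma sq_sum_measure_le {ι : Type*} {A : ι → Set Ω} (hA : ∀ i, MeasurableSet (A i))
    (s : Finset ι) :
    (∑ i ∈ s, μ (A i)) ^ 2 ≤ μ (⋃ i ∈ s, A i) * ∑ j ∈ s, ∑ i ∈ s, μ (A i ∩ A j) := by
  set f : Ω → ℝ≥0∞ := fun ω => ∑ i ∈ s, (A i).indicator 1 ω
  have hf : Measurable f := Finset.measurable_sum s fun i _ => measurable_one.indicator (hA i)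
  have hsupp : Function.support f ⊆ ⋃ i ∈ s, A i := by
    intro ω hω
    by_contra hω'
    exact hω (sum_eq_zero fun i hi => Set.indicator_of_notMem
      (fun h => hω' (Set.mem_biUnion hi h)) _)
  have hf1 : ∫⁻ ω, f ω ∂μ = ∑ i ∈ s, μ (A i) := by
    rw [lintegral_finsetSum _ fun i _ => measurable_one.indicator (hA i)]
    exact sum_congr rfl fun i _ => lintegral_indicator_one (hA i)
  have hf2 : ∫⁻ ω, f ω ^ 2 ∂μ = ∑ j ∈ s, ∑ i ∈ s, μ (A i ∩ A j) := by
    have hsq : ∀ ω, f ω ^ 2 = ∑ j ∈ s, ∑ i ∈ s, (A i ∩ A j).indicator 1 ω := fun ω => by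
      simp only [f, sq, sum_mul_sum, Set.inter_indicator_one, Pi.mul_apply]
      exact sum_comm
    have hAA : ∀ i j, Measurable ((A i ∩ A j).indicator (1 : Ω → ℝ≥0∞)) := fun i j =>
      measurable_one.indicator ((hA i).inter (hA j))
    simp_rw [hsq]
    rw [lintegral_finsetSum _ fun j _ => Finset.measurable_sum _ fun i _ => hAA i j]
    refine sum_congr rfl fun j _ => ?_
    rw [lintegral_finsetSum _ fun i _ => hAA i j]
    exact sum_congr rfl fun i _ => lintegral_indicator_one ((hA i).inter (hA j))
  rw [← hf1, ← hf2]
  exact sq_lintegral_le_measure_mul_lintegral_sq μ hf.aemeasurable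
    (Finset.measurableSet_biUnion s fun i _ => hA i) hsupp

lemma sq_sum_measureReal_le [IsFiniteMeasure μ] {ι : Type*} {A : ι → Set Ω}
    (hA : ∀ i, MeasurableSet (A i)) (s : Finset ι) :
    (∑ i ∈ s, μ.real (A i)) ^ 2 ≤
      μ.real (⋃ i ∈ s, A i) * ∑ j ∈ s, ∑ i ∈ s, μ.real (A i ∩ A j) := by
  have h := ENNReal.toReal_mono
    (ENNReal.mul_ne_top (measure_ne_top _ _) (by simp [ENNReal.sum_eq_top]))
    (sq_sum_measure_le μ hA s)
  simpa [measureReal_def, ENNReal.toReal_sum, measure_ne_top] using h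

lemma sq_sum_Icc_measureReal_le [IsFiniteMeasure μ] {A : ℕ → Set Ω}
    (hA : ∀ n, MeasurableSet (A n)) (m k : ℕ) :
    (∑ i ∈ Icc m k, μ.real (A i)) ^ 2 ≤ μ.real (⋃ i ∈ Icc m k, A i) *
      (∑ i ∈ Icc m k, μ.real (A i) + 2 * pairSum (fun i j => μ.real (A i ∩ A j)) m k) := by
  have h := sq_sum_measureReal_le μ hA (Icc m k)
  rw [sum_Icc_sum_Icc_eq_sum_add_two_mul_pairSum fun i j => by rw [Set.inter_comm]] at h
  simpa only [Set.inter_self] using h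

lemma tendsto_sum_Icc_measureReal_atTop [IsFiniteMeasure μ] {A : ℕ → Set Ω}
    (hdiv : ∑' n, μ (A n) = ∞) (l : ℕ) :
    Tendsto (fun k => ∑ i ∈ Icc l k, μ.real (A i)) atTop atTop := by
  have hnot : ¬Summable fun n => μ.real (A n) := fun hs => by
    have h := ENNReal.ofReal_tsum_of_nonneg (fun n => measureReal_nonneg) hs
    simp only [measureReal_def, ENNReal.ofReal_toReal (measure_ne_top μ _)] at h
    exact ENNReal.ofReal_ne_top (h.trans hdiv)
  have hrange := (not_summable_iff_tendsto_nat_atTop_of_nonneg fun n => measureReal_nonneg).1 hnot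
  refine (tendsto_atTop_add_const_right _ (-∑ i ∈ range l, μ.real (A i))
    (hrange.comp (tendsto_add_atTop_nat 1))).congr' ?_
  filter_upwards [eventually_ge_atTop l] with k hk
  rw [← Ico_add_one_right_eq_Icc, sum_Ico_eq_sub _ (by omega)]
  simp [sub_eq_add_neg]

lemma le_measureReal_limsup_of_eventually_le [IsFiniteMeasure μ] {A : ℕ → Set Ω}
    (hA : ∀ n, MeasurableSet (A n)) {x : ℝ} (hx : ∀ᶠ m in atTop, x ≤ μ.real (⋃ i ≥ m, A i)) :
    x ≤ μ.real (limsup A atTop) := by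
  have hlim : limsup A atTop = ⋂ m, ⋃ i ≥ m, A i := by
    simp [limsup_eq_iInf_iSup_of_nat]
  have htend : Tendsto (fun m => μ (⋃ i ≥ m, A i)) atTop (𝓝 (μ (limsup A atTop))) := by
    rw [hlim]
    refine tendsto_measure_iInter_atTop (fun m => ?_) (fun a b hab => ?_) ⟨0, measure_ne_top μ _⟩
    · exact (MeasurableSet.biUnion (Set.to_countable _) fun i _ => hA i).nullMeasurableSet
    · exact Set.iUnion₂_mono' fun i hi => ⟨i, le_trans hab hi, subset_rfl⟩
  exact ge_of_tendsto ((ENNReal.tendsto_toReal (measure_ne_top μ _)).comp htend) hx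

lemma pairSum_div_le_measureReal_add [IsProbabilityMeasure μ] {A : ℕ → Set Ω}
    (hA : ∀ n, MeasurableSet (A n)) {l m k : ℕ} (hlm : l ≤ m) (hmk : m ≤ k + 1)
    (hT : 2 ≤ ∑ i ∈ Icc l k, μ.real (A i)) :
    pairSum (fun i j => μ.real (A i) * μ.real (A j)) l k /
        pairSum (fun i j => μ.real (A i ∩ A j)) l k ≤
      μ.real (⋃ i ≥ m, A i) +
        (4 * ∑ i ∈ Ico l m, μ.real (A i) + 2) / ∑ i ∈ Icc l k, μ.real (A i) := by
  set T := ∑ i ∈ Icc l k, μ.real (A i)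
  set T' := ∑ i ∈ Icc m k, μ.real (A i)
  set c := ∑ i ∈ Ico l m, μ.real (A i)
  set D := pairSum (fun i j => μ.real (A i ∩ A j)) l k
  set D' := pairSum (fun i j => μ.real (A i ∩ A j)) m k
  set p := μ.real (⋃ i ∈ Icc m k, A i)
  have hsplit : T = c + T' := by
    simp only [T, T', c, ← Ico_add_one_right_eq_Icc, sum_Ico_consecutive _ hlm hmk]
  have hc : 0 ≤ c := sum_nonneg fun _ _ => measureReal_nonneg
  have hT' : 0 ≤ T' := sum_nonneg fun _ _ => measureReal_nonneg
  have hD' : D' ≤ D := pairSum_le_pairSum_of_le (fun _ _ => measureReal_nonneg) hlm k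
  have hp : 0 ≤ p := measureReal_nonneg
  -- `T ^ 2 - 2 * c * T = T' ^ 2 - c ^ 2`
  have hpT : T ^ 2 - 2 * c * T ≤ p * (T + 2 * D) := by
    have hPZ : T' ^ 2 ≤ p * (T' + 2 * D') := sq_sum_Icc_measureReal_le μ hA m k
    nlinarith [mul_nonneg hp (by linarith : 0 ≤ T - T' + 2 * (D - D'))]
  have hD0 : 0 ≤ D := pairSum_nonneg (fun _ _ => measureReal_nonneg) l k
  have hD : T ^ 2 ≤ T + 2 * D := (sq_sum_Icc_measureReal_le μ hA l k).trans
    (mul_le_of_le_one_left (by linarith) measureReal_le_one)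
  calc _ ≤ p + (4 * c + 2) / T := div_le_add_of_sq_sub_le_mul hT hc measureReal_le_one
        (two_mul_pairSum_mul_le_sq _ l k) hD hpT
    _ ≤ _ := by
      gcongr
      exact measureReal_mono (Set.iUnion₂_mono' fun i hi => ⟨i, (mem_Icc.1 hi).1, subset_rfl⟩)
        (measure_ne_top μ _)

lemma limsup_pairSum_div_le_measureReal [IsProbabilityMeasure μ] {A : ℕ → Set Ω}
    (hA : ∀ n, MeasurableSet (A n)) (hdiv : ∑' n, μ (A n) = ∞) {l m : ℕ} (hlm : l ≤ m) :
    limsup (fun k => pairSum (fun i j => μ.real (A i) * μ.real (A j)) l k /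
        pairSum (fun i j => μ.real (A i ∩ A j)) l k) atTop ≤ μ.real (⋃ i ≥ m, A i) := by
  have hT := tendsto_sum_Icc_measureReal_atTop μ hdiv l
  have hbound : Tendsto (fun k => μ.real (⋃ i ≥ m, A i) +
      (4 * ∑ i ∈ Ico l m, μ.real (A i) + 2) / ∑ i ∈ Icc l k, μ.real (A i)) atTop
      (𝓝 (μ.real (⋃ i ≥ m, A i))) := by
    simpa using tendsto_const_nhds.add (tendsto_const_nhds.div_atTop hT)
  have hratio : ∀ k, 0 ≤ pairSum (fun i j => μ.real (A i) * μ.real (A j)) l k /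
      pairSum (fun i j => μ.real (A i ∩ A j)) l k := fun k =>
    div_nonneg (pairSum_nonneg (fun _ _ => by positivity) l k)
      (pairSum_nonneg (fun _ _ => measureReal_nonneg) l k)
  refine (limsup_le_limsup ?_ (isCoboundedUnder_le_of_le atTop hratio)
    hbound.isBoundedUnder_le).trans hbound.limsup_eq.le
  filter_upwards [hT.eventually_ge_atTop 2, eventually_ge_atTop m] with k hk hmk
  exact pairSum_div_le_measureReal_add μ hA hlm (by omega) hk

end Measure

end KochenStone

open KochenStone

/-- The Kochen–Stone theorem: if `∑ P[A n] = ∞`, then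
`P[A_n i.o.] ≥ limsup_k (∑_{i0 ≤ i < j ≤ k} P[A_i] P[A_j]) / (∑_{i0 ≤ i < j ≤ k} P[A_i ∩ A_j])`. -/
theorem kochen_stone {Ω : Type*} {m0 : MeasurableSpace Ω}
    (μ : Measure Ω) [IsProbabilityMeasure μ]
    (A : ℕ → Set Ω) (hA : ∀ n, MeasurableSet (A n))
    (hdiv : ∑' n : ℕ, μ (A n) = ⊤) (i0 : ℕ) :
    (μ (limsup A atTop)).toReal ≥
      limsup (fun k : ℕ =>
        (∑ j ∈ Finset.Icc i0 k, ∑ i ∈ Finset.Ico i0 j,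
            (μ (A i)).toReal * (μ (A j)).toReal) /
        (∑ j ∈ Finset.Icc i0 k, ∑ i ∈ Finset.Ico i0 j,
            (μ (A i ∩ A j)).toReal)) atTop :=
  le_measureReal_limsup_of_eventually_le μ hA <| (eventually_ge_atTop i0).mono fun _ him =>
    limsup_pairSum_div_le_measureReal μ hA hdiv him
end

section
/- For every δ ∈ (0,1) there is a constant C_δ such that for all large k, sum over pairs of integers i_0 ≤ i < j ≤ k of (1/(i ln i)) * (ln j)/(j ln^2 j - i ln^2 i) ≤ (1/2 + o(1)) ln^2 ln k as k → ∞ (with i_0 ≥ 3 fixed so that all terms are well-defined and positive). -/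
/-!
Write `g x = 1 / (x log x)` and `h i j = log j / (j log² j - i log² i)`, and fix `M ≥ 1`.
Since `j log² j - i log² i ≥ (j - i) log² j`, we have `h i j ≤ 1 / ((j - i) log i)`; summed over
`i < j ≤ (M + 1) i` this is a harmonic number `H (M i) / log i ≤ 2 + log M`. For `j ≥ (M + 1) i`
instead `i log² i ≤ j log² j / (M + 1)`, so `h i j ≤ (1 + 1 / M) g j`. Hence the double sum is at most
`(2 + log M) G + (1 + 1 / M) ∑_{i < j} g i g j ≤ (2 + log M) G + (1 + 1 / M) G² / 2`, where
`G = ∑_{i₀ ≤ i ≤ k} g i ≤ log log k + O(1)` by comparison with `∫ dx / (x log x) = log log x`.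
Choosing `1 / M < ε` gives the bound.
-/

open Filter Real Finset

theorem AntitoneOn.sum_Ioc_le_sub_of_hasDerivAt {f F : ℝ → ℝ} {a b : ℕ} (hab : a ≤ b)
    (hf : AntitoneOn f (Set.Icc a b)) (hF : ∀ x ∈ Set.Icc (a : ℝ) b, HasDerivAt F (f x) x) :
    ∑ i ∈ Ioc a b, f i ≤ F b - F a := by
  have hab' : (a : ℝ) ≤ b := by exact_mod_cast hab
  rw [← Ico_add_one_add_one_eq_Ioc, ← sum_Ico_add' (c := 1)]
  calc ∑ i ∈ Ico a b, f ↑(i + 1) ≤ ∫ x in a..b, f x := hf.sum_le_integral_Ico hab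
    _ = F b - F a := by
      rw [← Set.uIcc_of_le hab'] at hf hF
      exact intervalIntegral.integral_eq_sub_of_hasDerivAt hF hf.intervalIntegrable

theorem antitoneOn_one_div_mul_log : AntitoneOn (fun x : ℝ ↦ 1 / (x * log x)) (Set.Ioi 1) :=
  fun _ hx _ _ hxy ↦ one_div_le_one_div_of_le (mul_pos (zero_lt_one.trans hx) (log_pos hx))
    (mul_le_mul hxy (log_le_log (zero_lt_one.trans hx) hxy) (log_pos hx).le
      ((zero_lt_one.trans hx).trans_le hxy).le)

theorem sum_Ioc_one_div_mul_log_le {a b : ℕ} (ha : 2 ≤ a) (hab : a ≤ b) :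
    ∑ j ∈ Ioc a b, 1 / ((j : ℝ) * log j) ≤ log (log b) - log (log a) := by
  have ha' : (1 : ℝ) < a := by exact_mod_cast ha
  refine AntitoneOn.sum_Ioc_le_sub_of_hasDerivAt (F := fun x ↦ log (log x)) hab
    (antitoneOn_one_div_mul_log.mono fun x hx ↦ ha'.trans_le hx.1) fun x hx ↦ ?_
  have hx : 1 < x := ha'.trans_le hx.1
  convert hasDerivAt_log_log (by positivity) hx.ne' (by linarith) using 1
  rw [one_div, mul_inv, div_eq_mul_inv]

theorem sum_Ioc_one_div_sub_eq_harmonic (i n : ℕ) :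
    ∑ j ∈ Ioc i (i + n), 1 / ((j : ℝ) - i) = harmonic n := by
  induction n with
  | zero => simp
  | succ n ih =>
    rw [← add_assoc, sum_Ioc_succ_top (by omega), ih, harmonic_succ]
    push_cast
    ring

theorem two_mul_sum_Icc_mul_sum_Ioc_le_sq (f : ℕ → ℝ) (a b : ℕ) :
    2 * ∑ i ∈ Icc a b, f i * ∑ j ∈ Ioc i b, f j ≤ (∑ i ∈ Icc a b, f i) ^ 2 := by
  induction b with
  | zero => simpa using sq_nonneg _
  | succ b ih =>
    by_cases hab : a ≤ b + 1
    · have hsplit : ∑ i ∈ Icc a (b + 1), f i * ∑ j ∈ Ioc i (b + 1), f j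
          = ∑ i ∈ Icc a b, f i * ∑ j ∈ Ioc i b, f j + (∑ i ∈ Icc a b, f i) * f (b + 1) := by
        rw [sum_Icc_succ_top hab, Ioc_self, sum_empty, mul_zero, add_zero, sum_mul,
          ← sum_add_distrib]
        refine sum_congr rfl fun i hi ↦ ?_
        rw [sum_Ioc_succ_top (mem_Icc.1 hi).2, mul_add]
      rw [hsplit, sum_Icc_succ_top hab]
      nlinarith [sq_nonneg (f (b + 1))]
    · rw [Icc_eq_empty (by omega)]
      simp

theorem eventually_mul_sq_add_le {α β : ℝ} (h : α < β) (A B : ℝ) :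
    ∀ᶠ x in atTop, α * x ^ 2 + A * x + B ≤ β * x ^ 2 := by
  filter_upwards [eventually_ge_atTop 1, eventually_ge_atTop ((|A| + |B|) / (β - α))]
    with x hx1 hx2
  rw [div_le_iff₀ (sub_pos.2 h)] at hx2
  nlinarith [le_abs_self A, le_abs_self B, abs_nonneg B,
    mul_le_mul_of_nonneg_right hx2 (zero_le_one.trans hx1)]

theorem log_div_sub_mul_log_sq_le_of_lt {x y : ℝ} (hx : 1 < x) (hxy : x < y) :
    log y / (y * log y ^ 2 - x * log x ^ 2) ≤ 1 / (y - x) / log x := by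
  have hLx : 0 < log x := log_pos hx
  have hLxy : log x ≤ log y := log_le_log (by linarith) hxy.le
  have hden : (y - x) * log y ^ 2 ≤ y * log y ^ 2 - x * log x ^ 2 := by
    nlinarith [mul_le_mul_of_nonneg_left (pow_le_pow_left₀ hLx.le hLxy 2) (by linarith : 0 ≤ x)]
  calc log y / (y * log y ^ 2 - x * log x ^ 2)
      ≤ log y / ((y - x) * log y ^ 2) :=
        div_le_div_of_nonneg_left (by linarith)
          (mul_pos (sub_pos.2 hxy) (pow_pos (hLx.trans_le hLxy) 2)) hden
    _ = 1 / (y - x) / log y := by field_simp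
    _ ≤ 1 / (y - x) / log x :=
        div_le_div_of_nonneg_left (one_div_nonneg.2 (sub_nonneg.2 hxy.le)) hLx hLxy

theorem log_div_sub_mul_log_sq_le_of_mul_le {x y M : ℝ} (hx : 1 < x) (hM : 0 < M)
    (hxy : (M + 1) * x ≤ y) :
    log y / (y * log y ^ 2 - x * log x ^ 2) ≤ (1 + 1 / M) * (1 / (y * log y)) := by
  have hy : 1 < y := by nlinarith
  have hLx : 0 < log x := log_pos hx
  have hLy : 0 < log y := log_pos hy
  have hLxy : log x ≤ log y := log_le_log (by linarith) (by nlinarith)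
  have hden : M / (M + 1) * (y * log y ^ 2) ≤ y * log y ^ 2 - x * log x ^ 2 := by
    have hxL : x * log x ^ 2 ≤ x * log y ^ 2 :=
      mul_le_mul_of_nonneg_left (pow_le_pow_left₀ hLx.le hLxy 2) (by linarith)
    have : (M + 1) * (x * log y ^ 2) ≤ y * log y ^ 2 := by
      nlinarith [mul_le_mul_of_nonneg_right hxy (sq_nonneg (log y))]
    rw [div_mul_eq_mul_div, div_le_iff₀ (by linarith)]
    nlinarith
  calc log y / (y * log y ^ 2 - x * log x ^ 2)
      ≤ log y / (M / (M + 1) * (y * log y ^ 2)) :=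
        div_le_div_of_nonneg_left hLy.le (by positivity) hden
    _ = (1 + 1 / M) * (1 / (y * log y)) := by field_simp

theorem sum_Ioc_log_div_sub_mul_log_sq_le_two_add_log {i m M : ℕ} (hi : 3 ≤ i) (hM : 0 < M)
    (hm : m ≤ (M + 1) * i) :
    ∑ j ∈ Ioc i m, log j / (j * log j ^ 2 - i * log i ^ 2) ≤ 2 + log M := by
  have hi' : (1 : ℝ) < i := by exact_mod_cast (by omega : 1 < i)
  have hLi : 1 ≤ log i := by
    rw [le_log_iff_exp_le (by linarith)]
    have : (3 : ℝ) ≤ i := by exact_mod_cast hi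
    linarith [exp_one_lt_d9]
  have hLM : 0 ≤ log M := log_natCast_nonneg M
  calc ∑ j ∈ Ioc i m, log j / (j * log j ^ 2 - i * log i ^ 2)
      ≤ ∑ j ∈ Ioc i m, 1 / ((j : ℝ) - i) / log i := sum_le_sum fun j hj ↦
        log_div_sub_mul_log_sq_le_of_lt hi' (by exact_mod_cast (mem_Ioc.1 hj).1)
    _ ≤ ∑ j ∈ Ioc i (i + M * i), 1 / ((j : ℝ) - i) / log i := by
        refine sum_le_sum_of_subset_of_nonneg (Ioc_subset_Ioc_right (by linarith)) ?_
        intro j hj _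
        have : (i : ℝ) < j := by exact_mod_cast (mem_Ioc.1 hj).1
        have : 0 < (j : ℝ) - i := by linarith
        positivity
    _ = harmonic (M * i) / log i := by
        rw [← sum_div, sum_Ioc_one_div_sub_eq_harmonic]
    _ ≤ (1 + log M + log i) / log i := by
        gcongr
        rw [add_assoc, ← log_mul (by positivity) (by positivity), ← Nat.cast_mul]
        exact harmonic_le_one_add_log _
    _ ≤ 2 + log M := by
        rw [div_le_iff₀ (by linarith)]
        nlinarith

theorem sum_Ioc_log_div_sub_mul_log_sq_le {i k M : ℕ} (hi : 3 ≤ i) (hik : i ≤ k) (hM : 0 < M) :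
    ∑ j ∈ Ioc i k, log j / (j * log j ^ 2 - i * log i ^ 2)
      ≤ 2 + log M + (1 + 1 / M) * ∑ j ∈ Ioc i k, 1 / ((j : ℝ) * log j) := by
  set m := min ((M + 1) * i) k
  have him : i ≤ m := le_min (by nlinarith) hik
  have hmk : m ≤ k := min_le_right _ _
  have hfar : ∑ j ∈ Ioc m k, log j / (j * log j ^ 2 - i * log i ^ 2)
      ≤ (1 + 1 / M) * ∑ j ∈ Ioc i k, 1 / ((j : ℝ) * log j) := by
    rw [mul_sum]
    calc ∑ j ∈ Ioc m k, log j / (j * log j ^ 2 - i * log i ^ 2)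
        ≤ ∑ j ∈ Ioc m k, (1 + 1 / (M : ℝ)) * (1 / (j * log j)) := by
          refine sum_le_sum fun j hj ↦ log_div_sub_mul_log_sq_le_of_mul_le
            (by exact_mod_cast (by omega : 1 < i)) (by exact_mod_cast hM) ?_
          have : (M + 1) * i ≤ j := by have := mem_Ioc.1 hj; omega
          exact_mod_cast this
      _ ≤ ∑ j ∈ Ioc i k, (1 + 1 / (M : ℝ)) * (1 / (j * log j)) :=
          sum_le_sum_of_subset_of_nonneg (Ioc_subset_Ioc_left him) fun _ _ _ ↦ by positivity
  rw [← sum_Ioc_consecutive _ him hmk]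
  linarith [sum_Ioc_log_div_sub_mul_log_sq_le_two_add_log hi hM (min_le_left _ k)]

theorem double_sum_le_mul_add_mul_sq {i₀ k M : ℕ} (hi₀ : 3 ≤ i₀) (hM : 0 < M) :
    ∑ j ∈ Icc i₀ k, ∑ i ∈ Ico i₀ j,
        1 / (i * log i) * (log j / (j * log j ^ 2 - i * log i ^ 2))
      ≤ (2 + log M) * ∑ i ∈ Icc i₀ k, 1 / ((i : ℝ) * log i)
        + (1 + 1 / M) / 2 * (∑ i ∈ Icc i₀ k, 1 / ((i : ℝ) * log i)) ^ 2 := by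
  set g : ℕ → ℝ := fun i ↦ 1 / (i * log i)
  rw [sum_comm' (t' := Icc i₀ k) (s' := fun i ↦ Ioc i k) fun j i ↦ by
    simp only [mem_Icc, mem_Ico, mem_Ioc]; omega]
  calc ∑ i ∈ Icc i₀ k, ∑ j ∈ Ioc i k, g i * (log j / (j * log j ^ 2 - i * log i ^ 2))
      ≤ ∑ i ∈ Icc i₀ k, g i * (2 + log M + (1 + 1 / M) * ∑ j ∈ Ioc i k, g j) := by
        refine sum_le_sum fun i hi ↦ ?_
        rw [← mul_sum]
        exact mul_le_mul_of_nonneg_left (sum_Ioc_log_div_sub_mul_log_sq_le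
          (hi₀.trans (mem_Icc.1 hi).1) (mem_Icc.1 hi).2 hM) (by positivity)
    _ = (2 + log M) * ∑ i ∈ Icc i₀ k, g i
          + (1 + 1 / M) / 2 * (2 * ∑ i ∈ Icc i₀ k, g i * ∑ j ∈ Ioc i k, g j) := by
        rw [mul_sum, mul_sum, mul_sum, ← sum_add_distrib]
        exact sum_congr rfl fun _ _ ↦ by ring
    _ ≤ _ := by
        gcongr
        exact two_mul_sum_Icc_mul_sum_Ioc_le_sq g i₀ k

/-- Double-sum estimate (Lemma 6 of the paper): for a fixed starting index `i₀ ≥ 3`,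
`∑_{i₀ ≤ i < j ≤ k} (1/(i ln i)) · ln j / (j ln² j − i ln² i) ≤ (1/2 + o(1)) ln² ln k`
as `k → ∞`. -/
theorem double_sum_estimate (i₀ : ℕ) (hi₀ : 3 ≤ i₀) :
    ∀ ε > (0 : ℝ), ∀ᶠ k : ℕ in atTop,
      (∑ j ∈ Finset.Icc i₀ k, ∑ i ∈ Finset.Ico i₀ j,
          (1 / (i * Real.log i)) *
            (Real.log j / (j * (Real.log j) ^ 2 - i * (Real.log i) ^ 2)))
        ≤ (1 / 2 + ε) * (Real.log (Real.log k)) ^ 2 := by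
  intro ε hε
  obtain ⟨n, hn⟩ := exists_nat_one_div_lt hε
  set M := n + 1 with hM
  have hα : (1 + 1 / (M : ℝ)) / 2 < 1 / 2 + ε := by rw [hM]; push_cast; linarith
  set K := 2 + log M
  set α := (1 + 1 / (M : ℝ)) / 2
  set c₁ := log (log (i₀ - 1 : ℕ))
  have hloglog : Tendsto (fun k : ℕ ↦ log (log k)) atTop atTop :=
    (tendsto_log_atTop.comp tendsto_log_atTop).comp tendsto_natCast_atTop_atTop
  filter_upwards [hloglog.eventually
      (eventually_mul_sq_add_le hα (K - 2 * α * c₁) (α * c₁ ^ 2 - K * c₁)),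
    eventually_ge_atTop i₀] with k hk hik
  have hG : ∑ i ∈ Icc i₀ k, 1 / ((i : ℝ) * log i) ≤ log (log k) - c₁ := by
    rw [show Icc i₀ k = Ioc (i₀ - 1) k by ext; simp only [mem_Icc, mem_Ioc]; omega]
    exact sum_Ioc_one_div_mul_log_le (by omega) (by omega)
  calc _ ≤ K * ∑ i ∈ Icc i₀ k, 1 / ((i : ℝ) * log i)
          + α * (∑ i ∈ Icc i₀ k, 1 / ((i : ℝ) * log i)) ^ 2 :=
        double_sum_le_mul_add_mul_sq hi₀ n.succ_pos
    _ ≤ K * (log (log k) - c₁) + α * (log (log k) - c₁) ^ 2 := by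
        have : 0 ≤ log M := log_natCast_nonneg _
        gcongr
    _ = α * log (log k) ^ 2 + (K - 2 * α * c₁) * log (log k) + (α * c₁ ^ 2 - K * c₁) := by ring
    _ ≤ _ := hk
end
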